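/- arXiv:1808.03548 — 2 statements merged into one kernel-verified Lean document; each statement's English description precedes it below -/
import Mathlib

section
/- Define Λ(u) := u / (ξ(ρ̄·cot(ξρ̄u/2) − ρ)) for u in the open interval (u₋, u₊), where ρ̄ := √(1−ρ²), ρ ∈ (−1,1), ξ > 0, and u₋ < 0 < 1 < u₊ are the explicit endpoints given by: u₋ = (2/(ξρ̄))arctan(ρ̄/ρ) if ρ<0, −π/ξ if ρ=0, (2/(ξρ̄))(arctan(ρ̄/ρ)−π) if ρ>0; u₊ = (2/(ξρ̄))(arctan(ρ̄/ρ)+π) if ρ<0, π/ξ if ρ=0, (2/(ξρ̄))arctan(ρ̄/ρ) if ρ>0. Then Λ(u) → +∞ as u → u₋⁺ and as u → u₊⁻. -/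
open Filter Set Real

lemma my_cot_lt_cot {x y : ℝ} (hxy : x < y) (hs : 0 < Real.sin x * Real.sin y)
    (hyx : y - x < Real.pi) : Real.cot y < Real.cot x := by
  have hx : Real.sin x ≠ 0 := by
    intro h; rw [h] at hs; simp at hs
  have hy : Real.sin y ≠ 0 := by
    intro h; rw [h] at hs; simp at hs
  have key : Real.cot x - Real.cot y = Real.sin (y - x) / (Real.sin x * Real.sin y) := by
    rw [Real.cot_eq_cos_div_sin, Real.cot_eq_cos_div_sin, div_sub_div _ _ hx hy,
      Real.sin_sub]
    ring_nf
  have h1 : 0 < Real.sin (y - x) := Real.sin_pos_of_pos_of_lt_pi (by linarith) hyx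
  have := div_pos h1 hs
  linarith [key ▸ this]

lemma my_tendsto_div_atTop {f g : ℝ → ℝ} {l : Filter ℝ} {a : ℝ} (ha : 0 < a)
    (hf : Tendsto f l (nhds a)) (hg : Tendsto g l (nhdsWithin 0 (Set.Ioi 0))) :
    Tendsto (fun x => f x / g x) l atTop := by
  have hinv : Tendsto (fun x => (g x)⁻¹) l atTop := tendsto_inv_nhdsGT_zero.comp hg
  simpa only [div_eq_mul_inv] using hf.pos_mul_atTop ha hinv

lemma my_cot_eq_inv_tan (x : ℝ) : Real.cot x = (Real.tan x)⁻¹ := by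
  rw [Real.cot_eq_cos_div_sin, Real.tan_eq_sin_div_cos, inv_div]

lemma my_cot_add_pi (x : ℝ) : Real.cot (x + Real.pi) = Real.cot x := by
  rw [Real.cot_eq_cos_div_sin, Real.cot_eq_cos_div_sin, Real.cos_add_pi, Real.sin_add_pi,
    neg_div_neg_eq]

/-- The limiting Heston cgf `Λ(u) = u / (ξ(ρ̄ cot(ξ ρ̄ u / 2) - ρ))` tends to `+∞`
at both endpoints `u₋` and `u₊` of its effective domain. -/
theorem stmt_3 (ξ ρ : ℝ) (hξ : 0 < ξ) (hρ : ρ ∈ Set.Ioo (-1 : ℝ) 1)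
    (ρbar : ℝ) (hρbar : ρbar = Real.sqrt (1 - ρ ^ 2))
    (Λ : ℝ → ℝ)
    (hΛ : ∀ u : ℝ, Λ u = u / (ξ * (ρbar * Real.cot (ξ * ρbar * u / 2) - ρ)))
    (um up : ℝ)
    (hum : um = if ρ < 0 then (2 / (ξ * ρbar)) * Real.arctan (ρbar / ρ)
      else if ρ = 0 then -(Real.pi / ξ)
      else (2 / (ξ * ρbar)) * (Real.arctan (ρbar / ρ) - Real.pi))
    (hup : up = if ρ < 0 then (2 / (ξ * ρbar)) * (Real.arctan (ρbar / ρ) + Real.pi)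
      else if ρ = 0 then Real.pi / ξ
      else (2 / (ξ * ρbar)) * Real.arctan (ρbar / ρ)) :
    Tendsto Λ (nhdsWithin um (Set.Ioi um)) atTop ∧
      Tendsto Λ (nhdsWithin up (Set.Iio up)) atTop := by
  obtain ⟨hρ1, hρ2⟩ := hρ
  have hρsq : 0 < 1 - ρ ^ 2 := by nlinarith
  have hρb : 0 < ρbar := by rw [hρbar]; exact Real.sqrt_pos.2 hρsq
  set c := ξ * ρbar / 2 with hc
  have hcpos : 0 < c := by positivity
  have hξρb : ξ * ρbar ≠ 0 := by positivity
  -- key endpoint facts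
  have hkey : 0 < c * up ∧ c * up < Real.pi ∧ Real.cot (c * up) = ρ / ρbar ∧
      c * um = c * up - Real.pi := by
    rcases lt_trichotomy ρ 0 with hρ0 | hρ0 | hρ0
    · -- ρ < 0
      have hA : Real.arctan (ρbar / ρ) < 0 := by
        have := Real.arctan_strictMono (div_neg_of_pos_of_neg hρb hρ0)
        rwa [Real.arctan_zero] at this
      have hA2 : -(Real.pi / 2) < Real.arctan (ρbar / ρ) := Real.neg_pi_div_two_lt_arctan _
      rw [hup, if_pos hρ0, hum, if_pos hρ0]
      have hcup : c * ((2 / (ξ * ρbar)) * (Real.arctan (ρbar / ρ) + Real.pi))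
          = Real.arctan (ρbar / ρ) + Real.pi := by
        rw [hc]; field_simp
      have hcum : c * ((2 / (ξ * ρbar)) * Real.arctan (ρbar / ρ))
          = Real.arctan (ρbar / ρ) := by
        rw [hc]; field_simp
      refine ⟨by rw [hcup]; linarith [Real.pi_gt_three], by rw [hcup]; linarith, ?_, by
        rw [hcup, hcum]; ring⟩
      rw [hcup, my_cot_add_pi, my_cot_eq_inv_tan, Real.tan_arctan, inv_div]
    · -- ρ = 0
      subst hρ0
      have hρb1 : ρbar = 1 := by rw [hρbar]; simp
      rw [if_neg (lt_irrefl (0:ℝ)), if_pos rfl] at hup hum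
      rw [hup, hum]
      have hcup : c * (Real.pi / ξ) = Real.pi / 2 := by
        rw [hc, hρb1]; field_simp
      have hcum : c * (-(Real.pi / ξ)) = -(Real.pi / 2) := by
        rw [hc, hρb1]; field_simp
      refine ⟨by rw [hcup]; positivity, by rw [hcup]; linarith [Real.pi_pos], ?_, by
        rw [hcup, hcum]; ring⟩
      rw [hcup, Real.cot_eq_cos_div_sin, Real.cos_pi_div_two]
      simp
    · -- ρ > 0
      have hA : 0 < Real.arctan (ρbar / ρ) := by
        have := Real.arctan_strictMono (show (0:ℝ) < ρbar / ρ by positivity)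
        rwa [Real.arctan_zero] at this
      have hA2 : Real.arctan (ρbar / ρ) < Real.pi / 2 := Real.arctan_lt_pi_div_two _
      have hρ0' : ¬ ρ < 0 := by linarith
      have hρ0'' : ρ ≠ 0 := by linarith
      rw [hup, if_neg hρ0', if_neg hρ0'', hum, if_neg hρ0', if_neg hρ0'']
      have hcup : c * ((2 / (ξ * ρbar)) * Real.arctan (ρbar / ρ))
          = Real.arctan (ρbar / ρ) := by
        rw [hc]; field_simp
      have hcum : c * ((2 / (ξ * ρbar)) * (Real.arctan (ρbar / ρ) - Real.pi))
          = Real.arctan (ρbar / ρ) - Real.pi := by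
        rw [hc]; field_simp
      refine ⟨by rw [hcup]; linarith, by rw [hcup]; linarith [Real.pi_pos], ?_, by
        rw [hcup, hcum]⟩
      rw [hcup, my_cot_eq_inv_tan, Real.tan_arctan, inv_div]
  obtain ⟨h1, h2, h3, h4⟩ := hkey
  have hup_pos : 0 < up := by
    rcases mul_pos_iff.mp h1 with ⟨_, h⟩ | ⟨h, _⟩
    · exact h
    · linarith
  have hum_neg : um < 0 := by
    by_contra h
    push_neg at h
    have : 0 ≤ c * um := mul_nonneg hcpos.le h
    linarith [Real.pi_pos]
  have harg : ∀ u : ℝ, ξ * ρbar * u / 2 = c * u := fun u => by rw [hc]; ring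
  set D : ℝ → ℝ := fun u => ξ * (ρbar * Real.cot (c * u) - ρ) with hD
  have hΛD : Λ = fun u => u / D u := by
    funext u; rw [hΛ u, harg u]
  -- continuity of D at points where sin (c * u) ≠ 0
  have hDcont : ∀ x : ℝ, Real.sin (c * x) ≠ 0 → Tendsto D (nhds x) (nhds (D x)) := by
    intro x hx
    have : ContinuousAt (fun u => Real.cot (c * u)) x := by
      have heq : (fun u : ℝ => Real.cot (c * u)) = fun u => Real.cos (c * u) / Real.sin (c * u) := by
        funext u; exact Real.cot_eq_cos_div_sin _
      rw [heq]
      exact ((Real.continuous_cos.comp (continuous_const.mul continuous_id)).continuousAt).div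
        ((Real.continuous_sin.comp (continuous_const.mul continuous_id)).continuousAt)
        (by simpa using hx)
    exact (continuousAt_const.mul ((continuousAt_const.mul this).sub continuousAt_const))
  have hsinθ : 0 < Real.sin (c * up) := Real.sin_pos_of_pos_of_lt_pi h1 h2
  have hsinθm : Real.sin (c * um) < 0 := by
    rw [h4, Real.sin_sub_pi]
    linarith
  have hDup : D up = 0 := by
    rw [hD]
    simp only
    rw [h3, mul_div_cancel₀ _ hρb.ne', sub_self, mul_zero]
  have hcotum : Real.cot (c * um) = ρ / ρbar := by
    rw [h4, ← h3, ← my_cot_add_pi (c * up - Real.pi)]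
    norm_num
  have hDum : D um = 0 := by
    rw [hD]
    simp only
    rw [hcotum, mul_div_cancel₀ _ hρb.ne', sub_self, mul_zero]
  have hmain : ∀ (v : ℝ) (S : Set ℝ) (hv : 0 < v)
      (hpos : ∀ᶠ u in nhdsWithin v S, 0 < D u)
      (hD0 : Tendsto D (nhdsWithin v S) (nhds 0))
      (hvS : Tendsto (fun u : ℝ => u) (nhdsWithin v S) (nhds v)), True := fun _ _ _ _ _ _ => trivial
  constructor
  · -- at um from the right: Λ u = (-u) / (-D u)
    rw [hΛD]
    have key : Tendsto (fun u => (-u) / (-D u)) (nhdsWithin um (Set.Ioi um)) atTop := by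
      apply my_tendsto_div_atTop (a := -um) (by linarith)
      · exact (tendsto_id.neg).mono_left nhdsWithin_le_nhds
      · rw [tendsto_nhdsWithin_iff]
        constructor
        · have := ((hDcont um hsinθm.ne).neg).mono_left
            (nhdsWithin_le_nhds : nhdsWithin um (Set.Ioi um) ≤ nhds um)
          rwa [hDum, neg_zero] at this
        · filter_upwards [Ioo_mem_nhdsGT hum_neg] with u hu
          have hx : c * um < c * u := by
            exact mul_lt_mul_of_pos_left hu.1 hcpos
          have hy : c * u < 0 := mul_neg_of_pos_of_neg hcpos hu.2
          have hsinu : Real.sin (c * u) < 0 := by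
            have h1' : 0 < -(c * u) := by linarith
            have h2' : -(c * u) < Real.pi := by
              have : -(c * um) < Real.pi := by rw [h4]; linarith
              linarith
            have := Real.sin_pos_of_pos_of_lt_pi h1' h2'
            rw [Real.sin_neg] at this
            linarith
          have hprod : 0 < Real.sin (c * um) * Real.sin (c * u) :=
            mul_pos_of_neg_of_neg hsinθm hsinu
          have hdiff : c * u - c * um < Real.pi := by
            rw [h4]; linarith
          have hlt : Real.cot (c * u) < ρ / ρbar := by
            rw [← hcotum]
            exact my_cot_lt_cot hx hprod hdiff
          have : ρbar * Real.cot (c * u) < ρ := by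
            have := mul_lt_mul_of_pos_left hlt hρb
            rwa [mul_div_cancel₀ _ hρb.ne'] at this
          have hDu : D u < 0 := by
            rw [hD]
            exact mul_neg_of_pos_of_neg hξ (by linarith)
          exact Set.mem_Ioi.mpr (by linarith)
    exact key.congr fun u => by rw [neg_div_neg_eq]
  · -- at up from the left
    rw [hΛD]
    apply my_tendsto_div_atTop (a := up) hup_pos
    · exact tendsto_id.mono_left nhdsWithin_le_nhds
    · rw [tendsto_nhdsWithin_iff]
      constructor
      · have := (hDcont up hsinθ.ne').mono_left
          (nhdsWithin_le_nhds : nhdsWithin up (Set.Iio up) ≤ nhds up)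
        rwa [hDup] at this
      · filter_upwards [Ioo_mem_nhdsLT hup_pos] with u hu
        have hx : 0 < c * u := mul_pos hcpos hu.1
        have hy : c * u < c * up := mul_lt_mul_of_pos_left hu.2 hcpos
        have hsinu : 0 < Real.sin (c * u) :=
          Real.sin_pos_of_pos_of_lt_pi hx (by linarith)
        have hprod : 0 < Real.sin (c * u) * Real.sin (c * up) := mul_pos hsinu hsinθ
        have hdiff : c * up - c * u < Real.pi := by linarith
        have hlt : ρ / ρbar < Real.cot (c * u) := by
          rw [← h3]
          exact my_cot_lt_cot hy hprod hdiff
        have : ρ < ρbar * Real.cot (c * u) := by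
          have := mul_lt_mul_of_pos_left hlt hρb
          rwa [mul_div_cancel₀ _ hρb.ne'] at this
        have hDu : 0 < D u := by
          rw [hD]
          exact mul_pos hξ (by linarith)
        exact Set.mem_Ioi.mpr hDu
end

section
/- Let V be a random variable with smooth density f on (0,∞) satisfying log f(v) ∼ −l₁ v^{l₂} as v → ∞, with l₁ > 0 and l₂ > 1. Then log E[e^{zV}] ∼ (l₂−1)·l₁·( z/(l₁ l₂) )^{l₂/(l₂−1)} as z → ∞; in particular log E[e^{zV}] is regularly varying in z with index l₂/(l₂−1). -/
/-!
Write `L_a(z) = sup_{v ≥ 0} (z v - a v ^ l₂)` (`legendrePow a l₂ z`); it is homogeneous of degree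
`l₂ / (l₂ - 1)` in `z` and satisfies `L_{S^(1-l₂) a} = S L_a`. If `f ≤ exp (-a v ^ l₂)` beyond `V₀`,
Young's inequality `(z + 1) v ≤ a v ^ l₂ + L_a(z + 1)` bounds the contribution of `v > V₀` to
`E[exp (z V)]` by `exp (L_a(z + 1))`, so `log E[exp (z V)] ≤ log 2 + z V₀ + L_a(z + 1)`, which is
`(1 + o(1)) L_a(z)`. If `f ≥ exp (-a v ^ l₂)` beyond `V₀`, restricting to `[w, w + 1]` at the
maximiser `w` of `z v - a v ^ l₂` gives
`log E[exp (z V)] ≥ z w - a (w + 1) ^ l₂ = (1 + o(1)) L_a(z)`.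
Since `log f(v) ∼ -l₁ v ^ l₂`, both bounds hold with `a` arbitrarily close to `l₁`, whence
`log E[exp (z V)] ∼ L_{l₁}(z)`; regular variation then follows from the homogeneity of `L_{l₁}`.
-/

open MeasureTheory Filter Set
open Real Topology Asymptotics ProbabilityTheory
open scoped ENNReal

/-- For `z ≥ 0`, this is `sup_{v ≥ 0} (z v - a v ^ p)`, the Legendre transform of `v ↦ a v ^ p`. -/
noncomputable def legendrePow (a p z : ℝ) : ℝ := (p - 1) * a * (z / (a * p)) ^ (p / (p - 1))

/-- The tangent line of `v ↦ v ^ p` at `w` lies below it (Bernoulli's inequality at `v / w - 1`). -/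
lemma mul_rpow_sub_one_mul_le {p v w : ℝ} (hp : 1 < p) (hv : 0 ≤ v) (hw : 0 ≤ w) :
    p * w ^ (p - 1) * v ≤ v ^ p + (p - 1) * w ^ p := by
  rcases hw.eq_or_lt with rfl | hw
  · rw [zero_rpow (by linarith), zero_rpow (by linarith)]
    simpa using rpow_nonneg hv p
  have hb := one_add_mul_self_le_rpow_one_add (s := v / w - 1)
    (by linarith [div_nonneg hv hw.le]) hp.le
  rw [add_sub_cancel, div_rpow hv hw.le, le_div_iff₀ (rpow_pos_of_pos hw p)] at hb
  calc p * w ^ (p - 1) * v = (1 + p * (v / w - 1)) * w ^ p + (p - 1) * w ^ p := by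
        rw [rpow_sub_one hw.ne']; field_simp; ring
    _ ≤ v ^ p + (p - 1) * w ^ p := by linarith

section Tail

variable {f g : ℝ → ℝ} {t : ℝ}

lemma eventually_le_exp_neg_mul (hg : ∀ᶠ v in atTop, 0 < g v)
    (htail : Tendsto (fun v => log (f v) / -g v) atTop (𝓝 1)) (ht : t < 1) :
    ∀ᶠ v in atTop, f v ≤ exp (-(t * g v)) := by
  filter_upwards [htail.eventually_const_lt ht, hg] with v hv hgv
  rw [lt_div_iff_of_neg (by linarith)] at hv
  exact (le_exp_log _).trans (exp_le_exp.2 (by linarith))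

lemma eventually_exp_neg_mul_le (hf : ∀ v, 0 ≤ f v) (hg : ∀ᶠ v in atTop, 0 < g v)
    (htail : Tendsto (fun v => log (f v) / -g v) atTop (𝓝 1)) (ht : 1 < t) :
    ∀ᶠ v in atTop, exp (-(t * g v)) ≤ f v := by
  filter_upwards [htail.eventually_lt_const ht, htail.eventually_const_lt one_pos, hg]
    with v hvt hv0 hgv
  rw [div_lt_iff_of_neg (by linarith)] at hvt
  rw [lt_div_iff_of_neg (by linarith), zero_mul] at hv0
  have hfv : 0 < f v := (hf v).lt_of_ne fun h => by simp [← h] at hv0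
  rw [← exp_log hfv]
  exact exp_le_exp.2 (by linarith)

end Tail

lemma Asymptotics.isEquivalent_of_forall_eventually_mul_le {α : Type*} {l : Filter α}
    {u v : α → ℝ} (hv : ∀ᶠ x in l, 0 < v x) (hup : ∀ S > 1, ∀ᶠ x in l, u x ≤ S * v x)
    (hlow : ∀ S, 0 < S → S < 1 → ∀ᶠ x in l, S * v x ≤ u x) : u ~[l] v := by
  rw [isEquivalent_iff_tendsto_one (hv.mono fun x hx => hx.ne'), tendsto_order]
  refine ⟨fun b hb => ?_, fun b hb => ?_⟩
  · obtain ⟨S, hbS, hS⟩ := exists_between (max_lt hb one_pos)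
    filter_upwards [hlow S ((le_max_right _ _).trans_lt hbS) hS, hv] with x hx hvx
    exact ((le_max_left _ _).trans_lt hbS).trans_le ((le_div_iff₀ hvx).2 hx)
  · obtain ⟨S, hS, hSb⟩ := exists_between hb
    filter_upwards [hup S hS, hv] with x hx hvx
    exact ((div_le_iff₀ hvx).2 hx).trans_lt hSb

section Legendre

variable {a p : ℝ}

lemma legendrePow_mul_rpow_sub_one (ha : 0 < a) (hp : 1 < p) {w : ℝ} (hw : 0 ≤ w) :
    legendrePow a p (a * p * w ^ (p - 1)) = (p - 1) * a * w ^ p := by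
  have hp' : p - 1 ≠ 0 := by linarith
  rw [legendrePow, mul_div_cancel_left₀ _ (by positivity), ← rpow_mul hw, mul_div_cancel₀ _ hp']

lemma eq_mul_rpow_sub_one (ha : 0 < a) (hp : 1 < p) {z : ℝ} (hz : 0 ≤ z) :
    z = a * p * ((z / (a * p)) ^ (p - 1)⁻¹) ^ (p - 1) := by
  rw [rpow_inv_rpow (by positivity) (by linarith)]
  field_simp

lemma mul_le_add_legendrePow (ha : 0 < a) (hp : 1 < p) {z v : ℝ} (hz : 0 ≤ z) (hv : 0 ≤ v) :
    z * v ≤ a * v ^ p + legendrePow a p z := by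
  obtain ⟨w, hw, rfl⟩ : ∃ w, 0 ≤ w ∧ z = a * p * w ^ (p - 1) :=
    ⟨_, by positivity, eq_mul_rpow_sub_one ha hp hz⟩
  rw [legendrePow_mul_rpow_sub_one ha hp hw]
  linear_combination a * mul_rpow_sub_one_mul_le hp hv hw

lemma legendrePow_pos (ha : 0 < a) (hp : 1 < p) {z : ℝ} (hz : 0 < z) : 0 < legendrePow a p z := by
  unfold legendrePow
  positivity

lemma legendrePow_eq_mul_rpow (ha : 0 ≤ a) (hp : 0 ≤ p) {z : ℝ} (hz : 0 ≤ z) :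
    legendrePow a p z = legendrePow a p 1 * z ^ (p / (p - 1)) := by
  simp only [legendrePow]
  rw [div_eq_mul_one_div z, mul_rpow hz (by positivity)]
  ring

lemma legendrePow_rpow_mul (ha : 0 < a) (hp : 1 < p) {S z : ℝ} (hS : 0 < S) (hz : 0 ≤ z) :
    legendrePow (S ^ (1 - p) * a) p z = S * legendrePow a p z := by
  have hp' : p - 1 ≠ 0 := by linarith
  have hscale : z / (S ^ (1 - p) * a * p) = S ^ (p - 1) * (z / (a * p)) := by
    rw [show 1 - p = -(p - 1) by ring, rpow_neg hS.le]
    field_simp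
  have hS1 : S ^ (1 - p) * S ^ p = S := by rw [← rpow_add hS]; simp
  simp only [legendrePow]
  rw [hscale, mul_rpow (by positivity) (by positivity), ← rpow_mul hS.le,
    mul_div_cancel₀ _ hp']
  linear_combination ((p - 1) * a * (z / (a * p)) ^ (p / (p - 1))) * hS1

lemma tendsto_add_legendrePow_add_one_div (ha : 0 < a) (hp : 1 < p) (c V : ℝ) :
    Tendsto (fun z => (c + z * V + legendrePow a p (z + 1)) / legendrePow a p z) atTop (𝓝 1) := by
  have hq : 1 < p / (p - 1) := (one_lt_div (by linarith)).2 (by linarith)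
  have hC : 0 < legendrePow a p 1 := legendrePow_pos ha hp one_pos
  have hlim : Tendsto (fun z : ℝ => (c * z ^ (-(p / (p - 1))) + V * z ^ (-(p / (p - 1) - 1)))
      / legendrePow a p 1 + (1 + z⁻¹) ^ (p / (p - 1))) atTop
      (𝓝 ((c * 0 + V * 0) / legendrePow a p 1 + (1 + 0) ^ (p / (p - 1)))) :=
    ((((tendsto_rpow_neg_atTop (by linarith)).const_mul c).add
      ((tendsto_rpow_neg_atTop (by linarith)).const_mul V)).div_const _).add
      ((tendsto_const_nhds.add tendsto_inv_atTop_zero).rpow_const (Or.inr (by linarith)))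
  rw [mul_zero, mul_zero, add_zero, zero_div, zero_add, add_zero, one_rpow] at hlim
  refine hlim.congr' ?_
  filter_upwards [eventually_gt_atTop 0] with z hz
  rw [legendrePow_eq_mul_rpow ha.le (by linarith) hz.le,
    legendrePow_eq_mul_rpow ha.le (by linarith) (by linarith : 0 ≤ z + 1),
    show 1 + z⁻¹ = (z + 1) / z by field_simp, div_rpow (by linarith) hz.le, rpow_neg hz.le,
    rpow_neg hz.le, rpow_sub hz, rpow_one]
  field_simp

lemma tendsto_div_rpow_inv_atTop (ha : 0 < a) (hp : 1 < p) :
    Tendsto (fun z => (z / (a * p)) ^ (p - 1)⁻¹) atTop atTop :=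
  (tendsto_rpow_atTop (by simpa using hp)).comp (tendsto_id.atTop_div_const (by positivity))

lemma tendsto_sub_mul_add_one_rpow_div_legendrePow (ha : 0 < a) (hp : 1 < p) :
    Tendsto (fun z => (z * (z / (a * p)) ^ (p - 1)⁻¹ - a * ((z / (a * p)) ^ (p - 1)⁻¹ + 1) ^ p)
      / legendrePow a p z) atTop (𝓝 1) := by
  have hg : Tendsto (fun w : ℝ => (p - (1 + w⁻¹) ^ p) / (p - 1)) atTop (𝓝 1) := by
    have := (((tendsto_const_nhds (x := (1 : ℝ))).add tendsto_inv_atTop_zero).rpow_const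
      (Or.inr (by linarith : 0 ≤ p)) |>.const_sub p).div_const (p - 1)
    rwa [add_zero, one_rpow, div_self (by linarith)] at this
  refine (hg.comp (tendsto_div_rpow_inv_atTop ha hp)).congr' ?_
  filter_upwards [eventually_gt_atTop 0] with z hz
  have hz' := eq_mul_rpow_sub_one ha hp hz.le
  rw [Function.comp_apply]
  set w := (z / (a * p)) ^ (p - 1)⁻¹
  have hw : 0 < w := by positivity
  rw [hz', legendrePow_mul_rpow_sub_one ha hp hw.le, rpow_sub_one hw.ne',
    show 1 + w⁻¹ = (w + 1) / w by field_simp, div_rpow (by positivity) hw.le]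
  have : 0 < p - 1 := by linarith
  field_simp

end Legendre

section Density

variable {f : ℝ → ℝ} {μ : Measure ℝ} {a p : ℝ}

lemma lintegral_exp_mul_le [IsProbabilityMeasure μ]
    (hdens : μ = volume.withDensity (fun v => ENNReal.ofReal (f v))) (ha : 0 < a) (hp : 1 < p)
    {V₀ z : ℝ} (hV₀ : 0 ≤ V₀) (hf : ∀ v > V₀, f v ≤ exp (-(a * v ^ p))) (hz : 0 ≤ z) :
    ∫⁻ v, ENNReal.ofReal (exp (z * v)) ∂μ
      ≤ ENNReal.ofReal (exp (z * V₀)) + ENNReal.ofReal (exp (legendrePow a p (z + 1))) := by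
  rw [← lintegral_add_compl _ (measurableSet_Iic (a := V₀)), compl_Iic]
  gcongr
  · calc ∫⁻ v in Iic V₀, ENNReal.ofReal (exp (z * v)) ∂μ
        ≤ ∫⁻ _ in Iic V₀, ENNReal.ofReal (exp (z * V₀)) ∂μ :=
          setLIntegral_mono measurable_const fun v hv =>
            ENNReal.ofReal_le_ofReal (exp_le_exp.2 (mul_le_mul_of_nonneg_left hv hz))
      _ ≤ ENNReal.ofReal (exp (z * V₀)) := by
          rw [setLIntegral_const]
          exact mul_le_of_le_one_right' prob_le_one
  · set g : ℝ → ℝ≥0∞ := fun v => ENNReal.ofReal (exp (-(a * v ^ p)))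
    have hμg : μ.restrict (Ioi V₀) ≤ (volume.restrict (Ioi V₀)).withDensity g := by
      rw [hdens, restrict_withDensity measurableSet_Ioi]
      exact withDensity_mono ((ae_restrict_iff' measurableSet_Ioi).2
        (ae_of_all _ fun v hv => ENNReal.ofReal_le_ofReal (hf v hv)))
    have hexp : ∫⁻ v in Ioi V₀, ENNReal.ofReal (exp (-v)) ≤ 1 := by
      rw [← ofReal_integral_eq_lintegral_ofReal
        (by simpa using (exp_neg_integrableOn_Ioi V₀ one_pos).integrable)
        (ae_of_all _ fun v => (exp_pos _).le), integral_exp_neg_Ioi]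
      exact ENNReal.ofReal_le_one.2 (exp_le_one_iff.2 (by linarith))
    calc ∫⁻ v in Ioi V₀, ENNReal.ofReal (exp (z * v)) ∂μ
        ≤ ∫⁻ v, ENNReal.ofReal (exp (z * v)) ∂(volume.restrict (Ioi V₀)).withDensity g :=
          lintegral_mono' hμg le_rfl
      _ = ∫⁻ v in Ioi V₀, g v * ENNReal.ofReal (exp (z * v)) :=
          lintegral_withDensity_eq_lintegral_mul _ (by fun_prop) (by fun_prop)
      _ ≤ ∫⁻ v in Ioi V₀,
            ENNReal.ofReal (exp (legendrePow a p (z + 1))) * ENNReal.ofReal (exp (-v)) := by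
          refine setLIntegral_mono' measurableSet_Ioi fun v hv => ?_
          have hyoung := mul_le_add_legendrePow ha hp (by linarith : 0 ≤ z + 1)
            (hV₀.trans (le_of_lt hv))
          simp only [g]
          rw [← ENNReal.ofReal_mul (exp_nonneg _), ← ENNReal.ofReal_mul (exp_nonneg _),
            ← exp_add, ← exp_add]
          exact ENNReal.ofReal_le_ofReal (exp_le_exp.2 (by linarith))
      _ ≤ ENNReal.ofReal (exp (legendrePow a p (z + 1))) := by
          rw [lintegral_const_mul _ (by fun_prop)]
          exact mul_le_of_le_one_right' hexp

lemma ofReal_exp_le_lintegral_exp_mul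
    (hdens : μ = volume.withDensity (fun v => ENNReal.ofReal (f v))) (ha : 0 ≤ a) (hp : 0 ≤ p)
    {w z : ℝ} (hw : 0 ≤ w) (hz : 0 ≤ z) (hf : ∀ v ∈ Icc w (w + 1), exp (-(a * v ^ p)) ≤ f v) :
    ENNReal.ofReal (exp (z * w - a * (w + 1) ^ p)) ≤ ∫⁻ v, ENNReal.ofReal (exp (z * v)) ∂μ := by
  have hμ : ENNReal.ofReal (exp (-(a * (w + 1) ^ p))) ≤ μ (Icc w (w + 1)) := by
    rw [hdens, withDensity_apply _ measurableSet_Icc]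
    calc ENNReal.ofReal (exp (-(a * (w + 1) ^ p)))
        = ∫⁻ _ in Icc w (w + 1), ENNReal.ofReal (exp (-(a * (w + 1) ^ p))) := by
          simp [volume_Icc]
      _ ≤ ∫⁻ v in Icc w (w + 1), ENNReal.ofReal (f v) :=
          setLIntegral_mono' measurableSet_Icc fun v hv => ENNReal.ofReal_le_ofReal <|
            (exp_le_exp.2 <| neg_le_neg <| mul_le_mul_of_nonneg_left
              (rpow_le_rpow (hw.trans hv.1) hv.2 hp) ha).trans (hf v hv)
  calc ENNReal.ofReal (exp (z * w - a * (w + 1) ^ p))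
      = ENNReal.ofReal (exp (z * w)) * ENNReal.ofReal (exp (-(a * (w + 1) ^ p))) := by
        rw [← ENNReal.ofReal_mul (exp_nonneg _), ← exp_add, sub_eq_add_neg]
    _ ≤ ENNReal.ofReal (exp (z * w)) * μ (Icc w (w + 1)) := by gcongr
    _ = ∫⁻ _ in Icc w (w + 1), ENNReal.ofReal (exp (z * w)) ∂μ := (setLIntegral_const _ _).symm
    _ ≤ ∫⁻ v in Icc w (w + 1), ENNReal.ofReal (exp (z * v)) ∂μ :=
        setLIntegral_mono (by fun_prop) fun v hv =>
          ENNReal.ofReal_le_ofReal (exp_le_exp.2 (mul_le_mul_of_nonneg_left hv.1 hz))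
    _ ≤ ∫⁻ v, ENNReal.ofReal (exp (z * v)) ∂μ := setLIntegral_le_lintegral _ _

lemma eventually_log_integral_exp_mul_le [IsProbabilityMeasure μ]
    (hdens : μ = volume.withDensity (fun v => ENNReal.ofReal (f v)))
    (hint : ∀ z : ℝ, Integrable (fun v => exp (z * v)) μ) (ha : 0 < a) (hp : 1 < p)
    (hf : ∀ᶠ v in atTop, f v ≤ exp (-(a * v ^ p))) {S : ℝ} (hS : 1 < S) :
    ∀ᶠ z in atTop, log (∫ v, exp (z * v) ∂μ) ≤ S * legendrePow a p z := by
  obtain ⟨V, hV⟩ := eventually_atTop.1 hf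
  set V₀ := max V 0
  filter_upwards [(tendsto_add_legendrePow_add_one_div ha hp (log 2) V₀).eventually_lt_const hS,
    eventually_gt_atTop 0] with z hratio hz
  have hL := legendrePow_pos ha hp hz
  have hL' : 0 ≤ legendrePow a p (z + 1) := (legendrePow_pos ha hp (by linarith)).le
  have hzV : 0 ≤ z * V₀ := mul_nonneg hz.le (le_max_right _ _)
  have hM : ∫ v, exp (z * v) ∂μ ≤ exp (z * V₀) + exp (legendrePow a p (z + 1)) := by
    rw [← ENNReal.ofReal_le_ofReal_iff (by positivity), ofReal_integral_eq_lintegral_ofReal (hint z)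
      (ae_of_all _ fun v => (exp_pos _).le), ENNReal.ofReal_add (by positivity) (by positivity)]
    exact lintegral_exp_mul_le hdens ha hp (le_max_right _ _)
      (fun v hv => hV v ((le_max_left _ _).trans hv.le)) hz.le
  calc log (∫ v, exp (z * v) ∂μ)
      ≤ log (2 * exp (z * V₀ + legendrePow a p (z + 1))) := by
        refine log_le_log (integral_exp_pos (hint z)) (hM.trans ?_)
        linarith [exp_le_exp.2 (by linarith : z * V₀ ≤ z * V₀ + legendrePow a p (z + 1)),
          exp_le_exp.2 (by linarith : legendrePow a p (z + 1) ≤ z * V₀ + legendrePow a p (z + 1))]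
    _ = log 2 + z * V₀ + legendrePow a p (z + 1) := by
        rw [log_mul two_ne_zero (exp_pos _).ne', log_exp, add_assoc]
    _ ≤ S * legendrePow a p z := ((div_lt_iff₀ hL).1 hratio).le

lemma eventually_mul_le_log_integral_exp_mul
    (hdens : μ = volume.withDensity (fun v => ENNReal.ofReal (f v)))
    (hint : ∀ z : ℝ, Integrable (fun v => exp (z * v)) μ) (ha : 0 < a) (hp : 1 < p)
    (hf : ∀ᶠ v in atTop, exp (-(a * v ^ p)) ≤ f v) {S : ℝ} (hS : S < 1) :
    ∀ᶠ z in atTop, S * legendrePow a p z ≤ log (∫ v, exp (z * v) ∂μ) := by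
  obtain ⟨V, hV⟩ := eventually_atTop.1 hf
  filter_upwards [(tendsto_sub_mul_add_one_rpow_div_legendrePow ha hp).eventually_const_lt hS,
    (tendsto_div_rpow_inv_atTop ha hp).eventually_ge_atTop (max V 0),
    eventually_gt_atTop 0] with z hratio hw hz
  set w := (z / (a * p)) ^ (p - 1)⁻¹
  have hM : exp (z * w - a * (w + 1) ^ p) ≤ ∫ v, exp (z * v) ∂μ := by
    rw [← ENNReal.ofReal_le_ofReal_iff (integral_nonneg fun v => (exp_pos _).le),
      ofReal_integral_eq_lintegral_ofReal (hint z) (ae_of_all _ fun v => (exp_pos _).le)]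
    exact ofReal_exp_le_lintegral_exp_mul hdens ha.le (by linarith) (le_of_max_le_right hw) hz.le
      fun v hv => hV v ((le_of_max_le_left hw).trans hv.1)
  calc S * legendrePow a p z ≤ z * w - a * (w + 1) ^ p :=
        ((lt_div_iff₀ (legendrePow_pos ha hp hz)).1 hratio).le
    _ ≤ log (∫ v, exp (z * v) ∂μ) := (le_log_iff_exp_le ((exp_pos _).trans_le hM)).2 hM

theorem isEquivalent_log_integral_exp_mul_legendrePow [IsProbabilityMeasure μ] (ha : 0 < a)
    (hp : 1 < p) (hfnonneg : ∀ v, 0 ≤ f v)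
    (hdens : μ = volume.withDensity (fun v => ENNReal.ofReal (f v)))
    (hint : ∀ z : ℝ, Integrable (fun v => exp (z * v)) μ)
    (htail : Tendsto (fun v => log (f v) / -(a * v ^ p)) atTop (𝓝 1)) :
    (fun z => log (∫ v, exp (z * v) ∂μ)) ~[atTop] legendrePow a p := by
  -- Replacing `a` by `√S ^ (1 - p) * a` in the tail bound of `f` multiplies `legendrePow` by `√S`;
  -- the other factor `√S` absorbs the error terms of the bounds on `log ∫ exp (z v)`.
  have hg : ∀ᶠ v in atTop, 0 < a * v ^ p :=
    (eventually_gt_atTop 0).mono fun v hv => by positivity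
  refine isEquivalent_of_forall_eventually_mul_le
    ((eventually_gt_atTop 0).mono fun z hz => legendrePow_pos ha hp hz) (fun S hS => ?_)
    (fun S hS0 hS1 => ?_)
  · have hs : 1 < √S := by rwa [lt_sqrt zero_le_one, one_pow]
    have ht : √S ^ (1 - p) < 1 := rpow_lt_one_of_one_lt_of_neg hs (by linarith)
    filter_upwards [eventually_log_integral_exp_mul_le (a := √S ^ (1 - p) * a) hdens hint
      (by positivity) hp
      ((eventually_le_exp_neg_mul hg htail ht).mono fun v hv => by rwa [← mul_assoc] at hv) hs,
      eventually_ge_atTop 0] with z hz hz0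
    rwa [legendrePow_rpow_mul ha hp (by positivity) hz0, ← mul_assoc,
      mul_self_sqrt (by linarith)] at hz
  · have hs0 : 0 < √S := sqrt_pos.2 hS0
    have hs : √S < 1 := by rwa [sqrt_lt' one_pos, one_pow]
    have ht : 1 < √S ^ (1 - p) := one_lt_rpow_of_pos_of_lt_one_of_neg hs0 hs (by linarith)
    filter_upwards [eventually_mul_le_log_integral_exp_mul (a := √S ^ (1 - p) * a) hdens hint
      (by positivity) hp
      ((eventually_exp_neg_mul_le hfnonneg hg htail ht).mono fun v hv => by
        rwa [← mul_assoc] at hv) hs,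
      eventually_ge_atTop 0] with z hz hz0
    rwa [legendrePow_rpow_mul ha hp hs0 hz0, ← mul_assoc, mul_self_sqrt hS0.le] at hz

end Density

theorem stmt_8_general (l₁ l₂ : ℝ) (hl₁ : 0 < l₁) (hl₂ : 1 < l₂)
    (f : ℝ → ℝ) (hfnonneg : ∀ v, 0 ≤ f v)
    (μ : Measure ℝ) [IsProbabilityMeasure μ]
    (hdens : μ = volume.withDensity (fun v => ENNReal.ofReal (f v)))
    (hmgf : ∀ z : ℝ, Integrable (fun v => Real.exp (z * v)) μ)
    (htail : Tendsto (fun v => Real.log (f v) / (-(l₁ * v ^ l₂))) atTop (nhds 1)) :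
    Tendsto (fun z => Real.log (∫ v, Real.exp (z * v) ∂μ) /
        ((l₂ - 1) * l₁ * (z / (l₁ * l₂)) ^ (l₂ / (l₂ - 1)))) atTop (nhds 1) ∧
    ∀ lam > (0:ℝ),
      Tendsto (fun z => Real.log (∫ v, Real.exp (lam * z * v) ∂μ) /
          Real.log (∫ v, Real.exp (z * v) ∂μ)) atTop
        (nhds (lam ^ (l₂ / (l₂ - 1)))) := by
  have hequiv := isEquivalent_log_integral_exp_mul_legendrePow hl₁ hl₂ hfnonneg hdens hmgf htail
  have hL : ∀ᶠ z in atTop, legendrePow l₁ l₂ z ≠ 0 :=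
    (eventually_gt_atTop 0).mono fun z hz => (legendrePow_pos hl₁ hl₂ hz).ne'
  refine ⟨(isEquivalent_iff_tendsto_one hL).1 hequiv, fun lam hlam => ?_⟩
  have hscale : (fun _ => lam ^ (l₂ / (l₂ - 1))) =ᶠ[atTop]
      fun z => legendrePow l₁ l₂ (lam * z) / legendrePow l₁ l₂ z := by
    filter_upwards [eventually_gt_atTop 0] with z hz
    have hC := legendrePow_pos hl₁ hl₂ one_pos
    rw [legendrePow_eq_mul_rpow hl₁.le (by linarith) (by positivity),
      legendrePow_eq_mul_rpow hl₁.le (by linarith) hz.le, mul_rpow hlam.le hz.le]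
    field_simp
  exact ((hequiv.comp_tendsto (tendsto_id.const_mul_atTop hlam)).div hequiv).symm.tendsto_nhds
    (tendsto_const_nhds.congr' hscale)

/-- Kasahara-type Tauberian asymptotics: if `V` has density `f` on `(0,∞)` with
`log f(v) ∼ -l₁ v^(l₂)` (`l₁ > 0`, `l₂ > 1`), then
`log E[exp (z V)] ∼ (l₂-1) l₁ (z/(l₁ l₂))^(l₂/(l₂-1))` as `z → ∞`; in particular
`z ↦ log E[exp (z V)]` is regularly varying with index `l₂/(l₂-1)`. -/
theorem stmt_8 (l₁ l₂ : ℝ) (hl₁ : 0 < l₁) (hl₂ : 1 < l₂)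
    (f : ℝ → ℝ) (hfnonneg : ∀ v, 0 ≤ f v) (hfsupp : ∀ v ≤ (0:ℝ), f v = 0)
    (μ : Measure ℝ) [IsProbabilityMeasure μ]
    (hdens : μ = volume.withDensity (fun v => ENNReal.ofReal (f v)))
    (hmgf : ∀ z : ℝ, Integrable (fun v => Real.exp (z * v)) μ)
    (htail : Tendsto (fun v => Real.log (f v) / (-(l₁ * v ^ l₂))) atTop (nhds 1)) :
    Tendsto (fun z => Real.log (∫ v, Real.exp (z * v) ∂μ) /
        ((l₂ - 1) * l₁ * (z / (l₁ * l₂)) ^ (l₂ / (l₂ - 1)))) atTop (nhds 1) ∧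
    ∀ lam > (0:ℝ),
      Tendsto (fun z => Real.log (∫ v, Real.exp (lam * z * v) ∂μ) /
          Real.log (∫ v, Real.exp (z * v) ∂μ)) atTop
        (nhds (lam ^ (l₂ / (l₂ - 1)))) :=
  stmt_8_general l₁ l₂ hl₁ hl₂ f hfnonneg μ hdens hmgf htail
end
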